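/- arXiv:1904.00357 — 7 statements merged into one kernel-verified Lean document; each statement's English description precedes it below -/
import Mathlib

section
/- Let A' and B be F_q-subspaces of F_{q^m} with dim A' = α' and dim B = β, and suppose dim(A'B) = α'β. If a is chosen uniformly at random from F_{q^m} and A = A' + ⟨a⟩, then the probability that dim(AB) < α'β + β is at most q^{α'β+β}/q^m. -/
open Module Submodule

/-!
If no nonzero `b ∈ B` has `a * b ∈ A'B`, then `(x, b) ↦ x + a * b` is injective on `A'B × B`
with image `(A' + ⟨a⟩)B`, so that product has the full dimension `α'β + β`. Hence every bad `a`
is determined by a pair `(b, a * b) ∈ B × A'B` with `b ≠ 0`, and there are at most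
`|B| · |A'B| = q^(α'β+β)` of them.
-/

theorem Submodule.span_singleton_mul_eq_map {K L : Type*} [CommSemiring K] [Semiring L]
    [Algebra K L] (a : L) (B : Submodule K L) : span K {a} * B = B.map (LinearMap.mulLeft K a) := by
  ext x; simp [mem_span_singleton_mul]

theorem Submodule.finrank_sup_span_singleton_mul {K L : Type*} [Field K] [Ring L] [Algebra K L]
    [FiniteDimensional K L] {A B : Submodule K L} {a : L} (h : ∀ b ∈ B, a * b ∈ A * B → b = 0) :
    finrank K ↥((A ⊔ span K {a}) * B) = finrank K ↥(A * B) + finrank K ↥B := by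
  let φ := (A * B).subtype.coprod ((LinearMap.mulLeft K a).domRestrict B)
  have hrange : LinearMap.range φ = (A ⊔ span K {a}) * B := by
    rw [LinearMap.range_coprod, sup_mul, range_subtype, LinearMap.range_domRestrict,
      span_singleton_mul_eq_map]
  have hinj : Function.Injective φ := by
    rw [← LinearMap.ker_eq_bot, eq_bot_iff]
    rintro ⟨x, b⟩ hxb
    have hsum : (x : L) + a * b = 0 := hxb
    have hb : (b : L) = 0 := h b b.2 (by
      rw [eq_neg_of_add_eq_zero_right hsum]; exact neg_mem x.2)
    have hx : (x : L) = 0 := by simpa [hb] using hsum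
    exact Prod.ext (coe_eq_zero.mp hx) (coe_eq_zero.mp hb)
  rw [← hrange, LinearMap.finrank_range_of_inj hinj, finrank_prod]

theorem natCard_setOf_exists_mul_mem_le {M : Type*} [MulZeroClass M] [IsRightCancelMulZero M]
    (S T : Set M) [Finite S] [Finite T] :
    Nat.card {a : M | ∃ b ∈ S, b ≠ 0 ∧ a * b ∈ T} ≤ Nat.card S * Nat.card T := by
  choose w hwS hw0 hwT using fun a : {a : M | ∃ b ∈ S, b ≠ 0 ∧ a * b ∈ T} ↦ a.2
  rw [← Nat.card_prod]
  refine Nat.card_le_card_of_injective (fun a ↦ (⟨w a, hwS a⟩, ⟨a * w a, hwT a⟩)) ?_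
  intro a a' haa'
  simp only [Prod.mk.injEq, Subtype.mk.injEq] at haa'
  obtain ⟨hw, hmul⟩ := haa'
  rw [hw] at hmul
  exact Subtype.ext (mul_right_cancel₀ (hw0 a') hmul)

theorem stmt_0_general (q m α' β : ℕ)
    (K L : Type) [Field K] [Field L] [Algebra K L] [Fintype K] [Fintype L]
    (hcard : Fintype.card K = q) (hm : Module.finrank K L = m)
    (A' B : Submodule K L)
    (hB : Module.finrank K ↥B = β)
    (hA'B : Module.finrank K ↥(A' * B) = α' * β) :
    (Nat.card {a : L // Module.finrank K ↥((A' ⊔ Submodule.span K {a}) * B) < α' * β + β} : ℝ)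
      / (Nat.card L : ℝ) ≤ (q : ℝ) ^ (α' * β + β) / (q : ℝ) ^ m := by
  have hK : Nat.card K = q := by rw [Nat.card_eq_fintype_card, hcard]
  have hbad : {a : L | finrank K ↥((A' ⊔ span K {a}) * B) < α' * β + β} ⊆
      {a : L | ∃ b ∈ (B : Set L), b ≠ 0 ∧ a * b ∈ (A' * B : Submodule K L)} := by
    intro a (ha : _ < (_ : ℕ))
    by_contra hgood
    have h : ∀ b ∈ B, a * b ∈ A' * B → b = 0 := fun b hb hab ↦
      by_contra fun hb0 ↦ hgood ⟨b, hb, hb0, hab⟩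
    have := finrank_sup_span_singleton_mul h
    omega
  have hcount : Nat.card {a : L // finrank K ↥((A' ⊔ span K {a}) * B) < α' * β + β}
      ≤ q ^ (α' * β + β) := by
    calc _ ≤ Nat.card B * Nat.card ↥(A' * B) :=
          (Nat.card_mono (Set.toFinite _) hbad).trans (natCard_setOf_exists_mul_mem_le _ _)
      _ = q ^ (α' * β + β) := by
          rw [natCard_eq_pow_finrank (K := K) (V := B),
            natCard_eq_pow_finrank (K := K) (V := ↥(A' * B)), hK, hB, hA'B, ← pow_add, add_comm]
  have hq : 0 < q := hcard ▸ Fintype.card_pos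
  rw [natCard_eq_pow_finrank (K := K) (V := L), hK, hm, Nat.cast_pow]
  gcongr
  exact_mod_cast hcount

/-- If `A'`, `B` are `F_q`-subspaces of `F_{q^m}` with `dim A' = α'`,
`dim B = β` and `dim (A'B) = α'β`, then for a uniformly random `a` in the big field,
the probability that `dim ((A' + ⟨a⟩)B) < α'β + β` is at most `q^(α'β+β)/q^m`. -/
theorem stmt_0 (q m α' β : ℕ) (hq : 2 ≤ q)
    (K L : Type) [Field K] [Field L] [Algebra K L] [Fintype K] [Fintype L]
    (hcard : Fintype.card K = q) (hm : Module.finrank K L = m)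
    (A' B : Submodule K L)
    (hA' : Module.finrank K ↥A' = α') (hB : Module.finrank K ↥B = β)
    (hA'B : Module.finrank K ↥(A' * B) = α' * β) :
    (Nat.card {a : L // Module.finrank K ↥((A' ⊔ Submodule.span K {a}) * B) < α' * β + β} : ℝ)
      / (Nat.card L : ℝ) ≤ (q : ℝ) ^ (α' * β + β) / (q : ℝ) ^ m :=
  stmt_0_general q m α' β K L hcard hm A' B hB hA'B
end

section
/- Let B be a fixed F_q-subspace of F_{q^m} of dimension β, and let A be the subspace generated by α independent uniformly random vectors of F_{q^m}. Then dim(AB) = αβ holds with probability at least 1 − α·q^{αβ}/q^m. -/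
open Module Submodule

section aux

variable {K L : Type} [Field K] [Field L] [Algebra K L] [Fintype K] [Fintype L]

lemma aux_card (W : Submodule K L) :
    Nat.card W = Fintype.card K ^ finrank K W := by
  haveI : Fintype W := Fintype.ofFinite W
  rw [Nat.card_eq_fintype_card]
  exact card_eq_pow_finrank

def badSet (B W : Submodule K L) : Set L :=
  {y | ∃ b ∈ B, b ≠ 0 ∧ y * b ∈ W} ∪ {0}

lemma badSet_card (B W : Submodule K L) :
    Nat.card (badSet B W) ≤ Nat.card W * Nat.card B := by
  classical
  have key : ∀ p : W × B, ∃ z : badSet B W, True := by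
    intro p; exact ⟨⟨0, Or.inr rfl⟩, trivial⟩
  let f : W × B → badSet B W := fun p =>
    if h : (p.2 : L) = 0 then ⟨0, Or.inr rfl⟩
    else ⟨(p.1 : L) * (p.2 : L)⁻¹, Or.inl ⟨p.2, p.2.2, h, by
      have : (p.1 : L) * (p.2 : L)⁻¹ * (p.2 : L) = (p.1 : L) := by field_simp
      rw [this]; exact p.1.2⟩⟩
  have hsurj : Function.Surjective f := by
    rintro ⟨y, hy⟩
    rcases hy with ⟨b, hbB, hb0, hyb⟩ | h0
    · refine ⟨(⟨⟨y * b, hyb⟩, ⟨b, hbB⟩⟩ : W × B), ?_⟩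
      simp only [f, dif_neg hb0]
      ext
      field_simp
    · refine ⟨⟨⟨0, W.zero_mem⟩, ⟨0, B.zero_mem⟩⟩, ?_⟩
      simp only [f, dif_pos rfl]
      ext
      exact (Set.mem_singleton_iff.mp h0).symm
  calc Nat.card (badSet B W) ≤ Nat.card (W × B) :=
        Nat.card_le_card_of_surjective f hsurj
    _ = Nat.card W * Nat.card B := Nat.card_prod _ _

lemma step_rank {B W : Submodule K L} {x : L} (hx : x ∉ badSet B W) :
    finrank K ↥(W ⊔ span K {x} * B) = finrank K W + finrank K B := by
  have hx0 : x ≠ 0 := fun h => hx (Or.inr h)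
  have hinf : W ⊓ (span K {x} * B) = ⊥ := by
    rw [eq_bot_iff]
    intro y hy
    have hyW : y ∈ W := hy.1
    have hyx : y ∈ span K {x} * B := hy.2
    rw [Submodule.mem_span_singleton_mul] at hyx
    obtain ⟨b, hbB, hxb⟩ := hyx
    rcases eq_or_ne b 0 with rfl | hb0
    · rw [mul_zero] at hxb
      simp [← hxb]
    · exact absurd (Or.inl ⟨b, hbB, hb0, hxb ▸ hyW⟩) hx
  have hbij : Function.Bijective (LinearMap.mulLeft K x) := by
    constructor
    · intro a b h
      exact mul_left_cancel₀ hx0 h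
    · intro y
      exact ⟨x⁻¹ * y, by simp [LinearMap.mulLeft_apply, ← mul_assoc, mul_inv_cancel₀ hx0]⟩
  have hrk : finrank K ↥(span K {x} * B) = finrank K B := by
    have hmap : span K {x} * B = Submodule.map (LinearMap.mulLeft K x) B := by
      ext y
      simp only [Submodule.mem_span_singleton_mul, Submodule.mem_map, LinearMap.mulLeft_apply]
    rw [hmap]
    exact LinearEquiv.finrank_map_eq (LinearEquiv.ofBijective _ hbij) B
  have h2 := Submodule.finrank_sup_add_finrank_inf_eq W (span K {x} * B)
  rw [hinf, finrank_bot, hrk] at h2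
  omega

end aux

set_option linter.unusedSectionVars false

section aux2

variable {K L : Type} [Field K] [Field L] [Algebra K L] [Fintype K] [Fintype L]

lemma ext_card (B W : Submodule K L) :
    Fintype.card L - Fintype.card K ^ (finrank K W + finrank K B)
      ≤ Nat.card ↥((badSet B W)ᶜ) := by
  have h1 : (badSet B W).ncard + (badSet B W)ᶜ.ncard = Nat.card L :=
    Set.ncard_add_ncard_compl _
  rw [← Nat.card_coe_set_eq, ← Nat.card_coe_set_eq] at h1
  have hL : Nat.card L = Fintype.card L := Nat.card_eq_fintype_card
  have hb : Nat.card ↥(badSet B W) ≤ Fintype.card K ^ (finrank K W + finrank K B) := by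
    calc Nat.card ↥(badSet B W) ≤ Nat.card W * Nat.card B := badSet_card B W
      _ = Fintype.card K ^ (finrank K W + finrank K B) := by
          rw [aux_card, aux_card, pow_add]
  omega

lemma step_count (B : Submodule K L) (β : ℕ) (hB : finrank K B = β) (n : ℕ) :
    Nat.card {v : Fin n → L // finrank K ↥(span K (Set.range v) * B) = n * β} *
      (Fintype.card L - Fintype.card K ^ (n * β + β))
    ≤ Nat.card {v : Fin (n + 1) → L //
        finrank K ↥(span K (Set.range v) * B) = (n + 1) * β} := by
  classical
  set G := {v : Fin n → L // finrank K ↥(span K (Set.range v) * B) = n * β} with hG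
  let Ext : G → Type := fun v => ↥((badSet B (span K (Set.range v.1) * B))ᶜ)
  let F : (Σ v : G, Ext v) →
      {v : Fin (n + 1) → L // finrank K ↥(span K (Set.range v) * B) = (n + 1) * β} :=
    fun p => ⟨Fin.cons p.2.1 p.1.1, by
      have hr : span K (Set.range (Fin.cons p.2.1 p.1.1 : Fin (n + 1) → L)) * B
          = (span K (Set.range p.1.1) * B) ⊔ span K {p.2.1} * B := by
        rw [Fin.range_cons, Set.insert_eq, Submodule.span_union, Submodule.sup_mul, sup_comm]
      have hx : p.2.1 ∉ badSet B (span K (Set.range p.1.1) * B) := p.2.2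
      rw [hr, step_rank hx, p.1.2, hB]
      ring⟩
  have hFinj : Function.Injective F := by
    rintro ⟨⟨v, hv⟩, ⟨x, hx⟩⟩ ⟨⟨v', hv'⟩, ⟨x', hx'⟩⟩ h
    simp only [F, Subtype.mk.injEq] at h
    obtain ⟨hx_eq, hv_eq⟩ := Fin.cons_inj.mp h
    subst hx_eq
    subst hv_eq
    rfl
  have hcard1 : Nat.card (Σ v : G, Ext v) ≤
      Nat.card {v : Fin (n + 1) → L //
        finrank K ↥(span K (Set.range v) * B) = (n + 1) * β} :=
    Nat.card_le_card_of_injective F hFinj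
  haveI : Fintype G := Fintype.ofFinite G
  haveI : ∀ v : G, Fintype (Ext v) := fun v => Fintype.ofFinite _
  have hsig : Nat.card (Σ v : G, Ext v) = ∑ v : G, Nat.card (Ext v) := by
    rw [Nat.card_eq_fintype_card, Fintype.card_sigma]
    exact Finset.sum_congr rfl fun v _ => (Nat.card_eq_fintype_card).symm
  have hext : ∀ v : G, Fintype.card L - Fintype.card K ^ (n * β + β) ≤ Nat.card (Ext v) := by
    intro v
    have h := ext_card B (span K (Set.range v.1) * B)
    rw [v.2, hB] at h
    exact h
  calc Nat.card G * (Fintype.card L - Fintype.card K ^ (n * β + β))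
      = ∑ _v : G, (Fintype.card L - Fintype.card K ^ (n * β + β)) := by
        rw [Finset.sum_const, Finset.card_univ, smul_eq_mul, Nat.card_eq_fintype_card]
    _ ≤ ∑ v : G, Nat.card (Ext v) := Finset.sum_le_sum fun v _ => hext v
    _ = Nat.card (Σ v : G, Ext v) := hsig.symm
    _ ≤ _ := hcard1

end aux2

section main

variable {K L : Type} [Field K] [Field L] [Algebra K L] [Fintype K] [Fintype L]

lemma main_bound (q m β : ℕ) (hq : 2 ≤ q) (hcard : Fintype.card K = q)
    (hm : finrank K L = m) (B : Submodule K L) (hB : finrank K B = β) :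
    ∀ n : ℕ, (q : ℝ) ^ (m * n) * (q : ℝ) ^ m - n * (q : ℝ) ^ (n * β) * (q : ℝ) ^ (m * n)
      ≤ (Nat.card {v : Fin n → L //
          finrank K ↥(span K (Set.range v) * B) = n * β} : ℝ) * (q : ℝ) ^ m := by
  have hq0 : (0 : ℝ) < (q : ℝ) := by positivity
  have hq1 : (1 : ℝ) ≤ (q : ℝ) := by exact_mod_cast hq.trans' (by norm_num)
  have hcardL : Fintype.card L = q ^ m := by
    rw [card_eq_pow_finrank (K := K), hcard, hm]
  intro n
  induction n with
  | zero =>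
    have hall : ∀ v : Fin 0 → L, finrank K ↥(span K (Set.range v) * B) = 0 * β := by
      intro v
      rw [Set.range_eq_empty, Submodule.span_empty, Submodule.bot_mul]
      simp
    have hone : Nat.card {v : Fin 0 → L //
        finrank K ↥(span K (Set.range v) * B) = 0 * β} = 1 := by
      rw [Nat.card_congr (Equiv.subtypeUnivEquiv hall)]
      simp [Nat.card_eq_fintype_card]
    rw [hone]
    norm_num
  | succ n IH =>
    set g := Nat.card {v : Fin n → L //
        finrank K ↥(span K (Set.range v) * B) = n * β} with hg
    set g' := Nat.card {v : Fin (n + 1) → L //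
        finrank K ↥(span K (Set.range v) * B) = (n + 1) * β} with hg'
    have hsc := step_count B β hB n
    rw [hcardL, hcard] at hsc
    have hsc' : (g : ℝ) * ((q : ℝ) ^ m - (q : ℝ) ^ (n * β + β)) ≤ (g' : ℝ) := by
      calc (g : ℝ) * ((q : ℝ) ^ m - (q : ℝ) ^ (n * β + β))
          ≤ (g : ℝ) * ((q ^ m - q ^ (n * β + β) : ℕ) : ℝ) := by
            apply mul_le_mul_of_nonneg_left _ (by positivity)
            rcases le_or_gt (q ^ (n * β + β)) (q ^ m) with h | h
            · rw [Nat.cast_sub h]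
              push_cast
              exact le_refl _
            · rw [Nat.sub_eq_zero_of_le h.le]
              have hle : ((q : ℝ)) ^ m ≤ (q : ℝ) ^ (n * β + β) := by exact_mod_cast h.le
              push_cast
              linarith
        _ ≤ (g' : ℝ) := by exact_mod_cast hsc
    have hgub : (g : ℝ) ≤ (q : ℝ) ^ (m * n) := by
      have h1 : g ≤ Nat.card (Fin n → L) :=
        Nat.card_le_card_of_injective _ Subtype.coe_injective
      have h2 : Nat.card (Fin n → L) = q ^ (m * n) := by
        rw [Nat.card_fun, Nat.card_eq_fintype_card (α := Fin n), Fintype.card_fin,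
          Nat.card_eq_fintype_card, hcardL, ← pow_mul]
      rw [h2] at h1
      exact_mod_cast h1
    have hg0 : (0 : ℝ) ≤ (g : ℝ) := by positivity
    have hpm : (0 : ℝ) < (q : ℝ) ^ m := by positivity
    have h4 : (g : ℝ) * (q : ℝ) ^ m * (q : ℝ) ^ m
        - (g : ℝ) * (q : ℝ) ^ (n * β + β) * (q : ℝ) ^ m ≤ (g' : ℝ) * (q : ℝ) ^ m := by
      have := mul_le_mul_of_nonneg_right hsc' hpm.le
      nlinarith [this]
    have h5 : ((q : ℝ) ^ (m * n) * (q : ℝ) ^ m - n * (q : ℝ) ^ (n * β) * (q : ℝ) ^ (m * n))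
        * (q : ℝ) ^ m ≤ (g : ℝ) * (q : ℝ) ^ m * (q : ℝ) ^ m :=
      mul_le_mul_of_nonneg_right IH hpm.le
    have h6 : (g : ℝ) * (q : ℝ) ^ (n * β + β) * (q : ℝ) ^ m
        ≤ (q : ℝ) ^ (m * n) * (q : ℝ) ^ (n * β + β) * (q : ℝ) ^ m := by
      gcongr
    have h7 : (n : ℝ) * (q : ℝ) ^ (n * β) * (q : ℝ) ^ (m * n) * (q : ℝ) ^ m
        ≤ (n : ℝ) * (q : ℝ) ^ (n * β + β) * (q : ℝ) ^ (m * n) * (q : ℝ) ^ m := by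
      gcongr
      all_goals first | exact hq1 | omega
    have e1 : (q : ℝ) ^ (m * (n + 1)) = (q : ℝ) ^ (m * n) * (q : ℝ) ^ m := by
      rw [Nat.mul_succ, pow_add]
    have e2 : (q : ℝ) ^ ((n + 1) * β) = (q : ℝ) ^ (n * β + β) := by
      rw [Nat.succ_mul]
    rw [e1, e2]
    push_cast
    nlinarith [h4, h5, h6, h7]

end main

/-- For a fixed subspace `B` of dimension `β`, if `A` is generated by
`α` independent uniformly random vectors of `F_{q^m}`, then `dim (AB) = αβ` with
probability at least `1 - α q^(αβ)/q^m`. -/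
theorem stmt_1 (q m α β : ℕ) (hq : 2 ≤ q)
    (K L : Type) [Field K] [Field L] [Algebra K L] [Fintype K] [Fintype L]
    (hcard : Fintype.card K = q) (hm : Module.finrank K L = m)
    (B : Submodule K L) (hB : Module.finrank K ↥B = β) :
    1 - (α : ℝ) * (q : ℝ) ^ (α * β) / (q : ℝ) ^ m ≤
      (Nat.card {v : Fin α → L //
          Module.finrank K ↥(Submodule.span K (Set.range v) * B) = α * β} : ℝ)
        / (Nat.card (Fin α → L) : ℝ) := by
  have hq0 : (0 : ℝ) < (q : ℝ) := by
    have : 0 < q := by omega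
    exact_mod_cast this
  have hpm : (0 : ℝ) < (q : ℝ) ^ m := by positivity
  have hptot : (0 : ℝ) < (q : ℝ) ^ (m * α) := by positivity
  have hcardL : Fintype.card L = q ^ m := by
    rw [card_eq_pow_finrank (K := K), hcard, hm]
  have hfun : (Nat.card (Fin α → L) : ℝ) = (q : ℝ) ^ (m * α) := by
    rw [Nat.card_fun, Nat.card_eq_fintype_card (α := Fin α), Fintype.card_fin,
      Nat.card_eq_fintype_card, hcardL, ← pow_mul]
    push_cast
    ring
  have key := main_bound q m β hq hcard hm B hB α
  rw [hfun, le_div_iff₀ hptot]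
  apply le_of_mul_le_mul_right _ hpm
  have heq : (1 - (α : ℝ) * (q : ℝ) ^ (α * β) / (q : ℝ) ^ m) * (q : ℝ) ^ (m * α)
      * (q : ℝ) ^ m
      = (q : ℝ) ^ (m * α) * (q : ℝ) ^ m - (α : ℝ) * (q : ℝ) ^ (α * β) * (q : ℝ) ^ (m * α) := by
    field_simp
  rw [heq]
  exact key
end

section
/- Let B₁ be an F_q-subspace of F_{q^m} of dimension β₁, and let b be uniformly random in F_{q^m}. The probability that b ∈ B₁ + b^{-1}B₁ (with the convention b^{-1} = 0 if b = 0) is at most 2q^{2β₁}/q^m. -/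
open Module Submodule Polynomial Finset

/-
If `b ≠ 0` and `b = c + b⁻¹ d` with `c, d ∈ B₁`, then `b` is a root of `X² - c X - d`; for `b = 0` this
holds with `c = d = 0`. Each of the `q^{2β₁}` pairs `(c, d)` contributes at most two roots, and
`|F_{q^m}| = q^m`.
-/

theorem card_filter_sq_eq_mul_add_le {L : Type*} [CommRing L] [IsDomain L] [Fintype L]
    [DecidableEq L] (c d : L) : #{x | x ^ 2 = c * x + d} ≤ 2 := by
  set p : L[X] := X ^ 2 - C c * X - C d
  have hdeg : p.natDegree = 2 := by unfold p; compute_degree!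
  have hp : p ≠ 0 := ne_zero_of_natDegree_gt (n := 0) (by omega)
  have hsub : ({x | x ^ 2 = c * x + d} : Finset L) ⊆ p.roots.toFinset := by
    intro x hx
    rw [mem_filter] at hx
    simp [mem_roots hp, p, hx.2]
  calc #{x | x ^ 2 = c * x + d} ≤ #p.roots.toFinset := card_le_card hsub
    _ ≤ Multiset.card p.roots := Multiset.toFinset_card_le _
    _ ≤ 2 := hdeg ▸ p.card_roots'

theorem card_filter_sq_eq_mul_add_of_mem_le {L : Type*} [CommRing L] [IsDomain L] [Fintype L]
    [DecidableEq L] (s : Finset L) :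
    #{x | ∃ c ∈ s, ∃ d ∈ s, x ^ 2 = c * x + d} ≤ 2 * #s ^ 2 := by
  have hsub : ({x | ∃ c ∈ s, ∃ d ∈ s, x ^ 2 = c * x + d} : Finset L) ⊆
      (s ×ˢ s).biUnion fun p => {x | x ^ 2 = p.1 * x + p.2} := by
    intro x hx
    obtain ⟨c, hc, d, hd, hx⟩ := (mem_filter.mp hx).2
    exact mem_biUnion.mpr ⟨(c, d), mem_product.mpr ⟨hc, hd⟩, mem_filter.mpr ⟨mem_univ x, hx⟩⟩
  calc _ ≤ _ := card_le_card hsub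
    _ ≤ ∑ p ∈ s ×ˢ s, #{x | x ^ 2 = p.1 * x + p.2} := card_biUnion_le
    _ ≤ ∑ _p ∈ s ×ˢ s, 2 := sum_le_sum fun p _ => card_filter_sq_eq_mul_add_le p.1 p.2
    _ = 2 * #s ^ 2 := by rw [sum_const, card_product, smul_eq_mul]; ring

theorem exists_sq_eq_mul_add_of_mem_sup_map_mulLeft_inv {K L : Type*} [CommSemiring K] [Field L]
    [Algebra K L] (B : Submodule K L) {b : L}
    (hb : b ∈ B ⊔ B.map (LinearMap.mulLeft K b⁻¹)) : ∃ c ∈ B, ∃ d ∈ B, b ^ 2 = c * b + d := by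
  rcases eq_or_ne b 0 with rfl | hb0
  · exact ⟨0, B.zero_mem, 0, B.zero_mem, by simp⟩
  obtain ⟨c, hc, _, ⟨d, hd, rfl⟩, hcd⟩ := mem_sup.mp hb
  rw [LinearMap.mulLeft_apply] at hcd
  refine ⟨c, hc, d, hd, ?_⟩
  calc b ^ 2 = (c + b⁻¹ * d) * b := by rw [hcd, sq]
    _ = c * b + d := by field_simp

theorem stmt_4_general (q m β₁ : ℕ)
    (K L : Type) [Field K] [Field L] [Algebra K L] [Fintype K] [Fintype L]
    (hcard : Fintype.card K = q) (hm : Module.finrank K L = m)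
    (B₁ : Submodule K L) (hB₁ : Module.finrank K ↥B₁ = β₁) :
    (Nat.card {b : L //
        b ∈ B₁ ⊔ Submodule.map (LinearMap.mulLeft K b⁻¹) B₁} : ℝ)
      / (Nat.card L : ℝ) ≤ 2 * (q : ℝ) ^ (2 * β₁) / (q : ℝ) ^ m := by
  classical
  set s : Finset L := {x | x ∈ B₁}
  have hs : #s = q ^ β₁ := by
    rw [← Fintype.card_subtype, ← hcard, ← hB₁, card_eq_pow_finrank (K := K)]
  have hcount : Nat.card {b : L // b ∈ B₁ ⊔ B₁.map (LinearMap.mulLeft K b⁻¹)} ≤ 2 * q ^ (2 * β₁) :=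
    calc _ = #{b | b ∈ B₁ ⊔ B₁.map (LinearMap.mulLeft K b⁻¹)} := by
          rw [Nat.card_eq_fintype_card, Fintype.card_subtype]
      _ ≤ #{x | ∃ c ∈ s, ∃ d ∈ s, x ^ 2 = c * x + d} := by
          refine card_le_card (monotone_filter_right _ fun b _ hb => ?_)
          simpa [s] using exists_sq_eq_mul_add_of_mem_sup_map_mulLeft_inv B₁ hb
      _ ≤ 2 * #s ^ 2 := card_filter_sq_eq_mul_add_of_mem_le s
      _ = 2 * q ^ (2 * β₁) := by rw [hs, ← pow_mul, mul_comm β₁]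
  have hL : (Nat.card L : ℝ) = (q : ℝ) ^ m := by
    rw [Nat.card_eq_fintype_card, card_eq_pow_finrank (K := K), hcard, hm]
    push_cast; rfl
  rw [hL]
  gcongr
  exact_mod_cast hcount

/-- For a subspace `B₁` of dimension `β₁` and uniformly random `b`,
the probability that `b ∈ B₁ + b⁻¹B₁` (with `0⁻¹ = 0`) is at most `2 q^(2β₁)/q^m`. -/
theorem stmt_4 (q m β₁ : ℕ) (hq : 2 ≤ q)
    (K L : Type) [Field K] [Field L] [Algebra K L] [Fintype K] [Fintype L]
    (hcard : Fintype.card K = q) (hm : Module.finrank K L = m)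
    (B₁ : Submodule K L) (hB₁ : Module.finrank K ↥B₁ = β₁) :
    (Nat.card {b : L //
        b ∈ B₁ ⊔ Submodule.map (LinearMap.mulLeft K b⁻¹) B₁} : ℝ)
      / (Nat.card L : ℝ) ≤ 2 * (q : ℝ) ^ (2 * β₁) / (q : ℝ) ^ m :=
  stmt_4_general q m β₁ K L hcard hm B₁ hB₁
end

section
/- Let B₁ be an F_q-subspace of F_{q^m} of dimension β₁ containing 1, let b be uniformly random in F_{q^m}, and set B = B₁ + ⟨b⟩. Then with probability at least 1 − 3q^{2β₁}/q^m, b ≠ 0 and dim(B + b^{-1}B) = 2·dim(B) − 1. -/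
open Module Submodule Polynomial

section aux
variable {K L : Type} [Field K] [Field L] [Algebra K L] [Fintype L]

omit [Fintype L] in
theorem key_lemma (B₁ : Submodule K L) (h1 : (1 : L) ∈ B₁) (b : L)
    (hbad : ¬ ((∃ w v : B₁, (w:L) ≠ 0 ∧ (w:L) * b = v) ∨ (∃ w v : B₁, b^2 + (w:L)*b = (v:L))))
    [FiniteDimensional K L] :
    b ≠ 0 ∧
      Module.finrank K
        ↥((B₁ ⊔ Submodule.span K {b}) ⊔
            Submodule.map (LinearMap.mulLeft K b⁻¹) (B₁ ⊔ Submodule.span K {b}))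
        = 2 * Module.finrank K ↥(B₁ ⊔ Submodule.span K {b}) - 1 := by
  push_neg at hbad
  obtain ⟨hbad1, hbad2⟩ := hbad
  have hb0 : b ≠ 0 := by
    intro h
    exact hbad1 ⟨1, h1⟩ 0 (by simp) (by simp [h])
  have hbB1 : b ∉ B₁ := by
    intro h
    exact hbad1 ⟨1, h1⟩ ⟨b, h⟩ (by simp) (by simp)
  set B := B₁ ⊔ Submodule.span K {b} with hB
  have hbB : b ∈ B := Submodule.mem_sup_right (Submodule.mem_span_singleton_self b)
  have h1B : (1 : L) ∈ B := Submodule.mem_sup_left h1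
  -- finrank B = finrank B₁ + 1
  have hdisj : B₁ ⊓ Submodule.span K {b} = ⊥ := by
    rw [Submodule.eq_bot_iff]
    intro x hx
    rw [Submodule.mem_inf] at hx
    obtain ⟨hx1, hx2⟩ := hx
    rw [Submodule.mem_span_singleton] at hx2
    obtain ⟨a, rfl⟩ := hx2
    by_contra hne
    have ha : a ≠ 0 := by rintro rfl; simp at hne
    exact hbB1 (by simpa [smul_smul, ha] using B₁.smul_mem a⁻¹ hx1)
  have hrankB : finrank K ↥B = finrank K ↥B₁ + 1 := by
    have h2 := Submodule.finrank_sup_add_finrank_inf_eq B₁ (Submodule.span K {b})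
    rw [← hB, hdisj, finrank_bot, finrank_span_singleton hb0] at h2
    omega
  -- the map
  set f := LinearMap.mulLeft K b⁻¹ with hf
  have hfi : Function.Injective f := by
    intro x y hxy
    simpa [hf, LinearMap.mulLeft_apply] using
      mul_left_cancel₀ (inv_ne_zero hb0) hxy
  have hrankmap : finrank K ↥(Submodule.map f B) = finrank K ↥B :=
    (Submodule.equivMapOfInjective f hfi B).finrank_eq.symm
  -- intersection is span {1}
  have hinf : B ⊓ Submodule.map f B = Submodule.span K {1} := by
    apply le_antisymm
    · intro x hx
      rw [Submodule.mem_inf] at hx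
      obtain ⟨hx1, hx2⟩ := hx
      rw [Submodule.mem_map] at hx2
      obtain ⟨y, hy, rfl⟩ := hx2
      rw [hB, Submodule.mem_sup] at hy
      obtain ⟨v, hv, s, hs, rfl⟩ := hy
      rw [Submodule.mem_span_singleton] at hs
      obtain ⟨μ, rfl⟩ := hs
      have hfyval : f (v + μ • b) = b⁻¹ * (v + μ • b) := rfl
      rw [hfyval] at hx1 ⊢
      rw [hB, Submodule.mem_sup] at hx1
      obtain ⟨u, hu, s, hs, hequ⟩ := hx1
      rw [Submodule.mem_span_singleton] at hs
      obtain ⟨lam, rfl⟩ := hs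
      -- multiply by b : v + μ•b = b*u + lam • b^2
      have heq : v + μ • b = b * u + lam • b^2 := by
        have h3 := congrArg (fun t => b * t) hequ.symm
        rw [mul_inv_cancel_left₀ hb0] at h3
        rw [h3, mul_add, mul_smul_comm, sq]
      by_cases hlam : lam = 0
      · -- (u - μ•1) * b = v
        subst hlam
        simp only [zero_smul, add_zero] at heq hequ
        have hkey : (u - μ • (1:L)) * b = v := by
          rw [sub_mul, smul_mul_assoc, one_mul]
          have : b * u = v + μ • b := heq.symm
          rw [mul_comm u b, this]; ring
        have humem : u - μ • (1:L) ∈ B₁ := B₁.sub_mem hu (B₁.smul_mem μ h1)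
        have hzero : u - μ • (1:L) = 0 := by
          by_contra hne
          exact hbad1 ⟨_, humem⟩ ⟨v, hv⟩ hne hkey
        have hu' : u = μ • (1:L) := by linear_combination hzero
        have hv0 : v = 0 := by rw [← hkey, hzero, zero_mul]
        rw [Submodule.mem_span_singleton]
        refine ⟨μ, ?_⟩
        rw [hv0, zero_add, mul_smul_comm, inv_mul_cancel₀ hb0]
      · -- quadratic case: contradiction
        exfalso
        have hw : lam⁻¹ • (u - μ • (1:L)) ∈ B₁ :=
          B₁.smul_mem _ (B₁.sub_mem hu (B₁.smul_mem μ h1))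
        have hv' : lam⁻¹ • v ∈ B₁ := B₁.smul_mem _ hv
        apply hbad2 ⟨_, hw⟩ ⟨_, hv'⟩
        show b^2 + (lam⁻¹ • (u - μ • (1:L))) * b = lam⁻¹ • v
        have hla : (algebraMap K L lam) ≠ 0 := by
          simpa using hlam
        apply mul_left_cancel₀ hla
        simp only [Algebra.smul_def, map_inv₀]
        simp only [Algebra.smul_def] at heq
        have hinv : (algebraMap K L lam) * (algebraMap K L lam)⁻¹ = 1 := mul_inv_cancel₀ hla
        linear_combination (-1 : L) * heq + ((u - algebraMap K L μ * 1) * b - v) * hinv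
    · rw [Submodule.span_le, Set.singleton_subset_iff]
      rw [SetLike.mem_coe, Submodule.mem_inf]
      refine ⟨h1B, Submodule.mem_map.mpr ⟨b, hbB, ?_⟩⟩
      show b⁻¹ * b = 1
      exact inv_mul_cancel₀ hb0
  have h2 := Submodule.finrank_sup_add_finrank_inf_eq B (Submodule.map f B)
  rw [hinf, finrank_span_singleton (one_ne_zero (α := L)), hrankmap] at h2
  exact ⟨hb0, by omega⟩

end aux

/-- For `B₁` of dimension `β₁` containing `1` and a uniformly random `b`,
setting `B = B₁ + ⟨b⟩`, with probability at least `1 - 3 q^(2β₁)/q^m` we have `b ≠ 0`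
and `dim (B + b⁻¹B) = 2 dim B - 1`. -/
theorem stmt_5 (q m β₁ : ℕ) (hq : 2 ≤ q)
    (K L : Type) [Field K] [Field L] [Algebra K L] [Fintype K] [Fintype L]
    (hcard : Fintype.card K = q) (hm : Module.finrank K L = m)
    (B₁ : Submodule K L) (hB₁ : Module.finrank K ↥B₁ = β₁) (h1 : (1 : L) ∈ B₁) :
    1 - 3 * (q : ℝ) ^ (2 * β₁) / (q : ℝ) ^ m ≤
      (Nat.card {b : L // b ≠ 0 ∧
        Module.finrank K
          ↥((B₁ ⊔ Submodule.span K {b}) ⊔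
              Submodule.map (LinearMap.mulLeft K b⁻¹) (B₁ ⊔ Submodule.span K {b}))
          = 2 * Module.finrank K ↥(B₁ ⊔ Submodule.span K {b}) - 1} : ℝ)
        / (Nat.card L : ℝ) := by
  classical
  have hfd : FiniteDimensional K L := Module.Finite.of_basis (IsNoetherian.finsetBasis K L)
  have hcardL : Fintype.card L = q ^ m := by
    rw [← hcard, ← hm]; exact Module.card_eq_pow_finrank
  have hcardB1 : Fintype.card ↥B₁ = q ^ β₁ := by
    rw [← hcard, ← hB₁]; exact Module.card_eq_pow_finrank
  set P : L → Prop := fun b => b ≠ 0 ∧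
        Module.finrank K
          ↥((B₁ ⊔ Submodule.span K {b}) ⊔
              Submodule.map (LinearMap.mulLeft K b⁻¹) (B₁ ⊔ Submodule.span K {b}))
          = 2 * Module.finrank K ↥(B₁ ⊔ Submodule.span K {b}) - 1 with hP
  set Bad : L → Prop := fun b =>
    (∃ w v : B₁, (w:L) ≠ 0 ∧ (w:L) * b = v) ∨ (∃ w v : B₁, b^2 + (w:L)*b = (v:L)) with hBad
  have hkey : ∀ b : L, ¬ Bad b → P b := fun b hb => key_lemma B₁ h1 b hb
  -- counting the bad set
  set bad1 : Finset L :=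
    Finset.image (fun p : ↥B₁ × ↥B₁ => (p.2 : L) / p.1) Finset.univ with hbad1def
  set bad2 : Finset L :=
    Finset.univ.biUnion (fun p : ↥B₁ × ↥B₁ =>
      (X^2 + C (p.1 : L) * X - C (p.2 : L)).roots.toFinset) with hbad2def
  have hsub : Finset.univ.filter Bad ⊆ bad1 ∪ bad2 := by
    intro b hb
    rw [Finset.mem_filter] at hb
    rcases hb.2 with ⟨w, v, hw, hwv⟩ | ⟨w, v, hwv⟩
    · apply Finset.mem_union_left
      rw [hbad1def, Finset.mem_image]
      exact ⟨(w, v), Finset.mem_univ _, by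
        show (v : L) / w = b
        rw [← hwv, mul_comm, mul_div_assoc, div_self hw, mul_one]⟩
    · apply Finset.mem_union_right
      rw [hbad2def, Finset.mem_biUnion]
      refine ⟨(w, v), Finset.mem_univ _, ?_⟩
      have hne : (X^2 + C (w : L) * X - C (v : L)) ≠ 0 := by
        intro h0
        have := congrArg Polynomial.natDegree h0
        rw [Polynomial.natDegree_zero] at this
        have h2 : (X^2 + C (w : L) * X - C (v : L)).natDegree = 2 := by
          compute_degree!
        omega
      rw [Multiset.mem_toFinset, Polynomial.mem_roots hne]
      show Polynomial.eval b _ = 0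
      simp only [Polynomial.eval_sub, Polynomial.eval_add, Polynomial.eval_pow,
        Polynomial.eval_mul, Polynomial.eval_C, Polynomial.eval_X]
      rw [← hwv]; ring
  have hcard1 : bad1.card ≤ q ^ (2 * β₁) := by
    calc bad1.card ≤ (Finset.univ : Finset (↥B₁ × ↥B₁)).card := Finset.card_image_le
    _ = q ^ (2 * β₁) := by
        rw [Finset.card_univ, Fintype.card_prod, hcardB1, ← pow_add, two_mul]
  have hcard2 : bad2.card ≤ 2 * q ^ (2 * β₁) := by
    calc bad2.card
        ≤ ∑ p : ↥B₁ × ↥B₁, ((X^2 + C (p.1 : L) * X - C (p.2 : L)).roots.toFinset).card :=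
          Finset.card_biUnion_le
      _ ≤ ∑ _p : ↥B₁ × ↥B₁, 2 := by
          apply Finset.sum_le_sum
          intro p _
          calc ((X^2 + C (p.1 : L) * X - C (p.2 : L)).roots.toFinset).card
              ≤ Multiset.card (X^2 + C (p.1 : L) * X - C (p.2 : L)).roots :=
                Multiset.toFinset_card_le _
            _ ≤ (X^2 + C (p.1 : L) * X - C (p.2 : L)).natDegree := Polynomial.card_roots' _
            _ ≤ 2 := by compute_degree
      _ = 2 * q ^ (2 * β₁) := by
          rw [Finset.sum_const, Finset.card_univ, Fintype.card_prod, hcardB1, ← pow_add,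
            two_mul β₁, smul_eq_mul, mul_comm]
  have hbadcard : (Finset.univ.filter Bad).card ≤ 3 * q ^ (2 * β₁) := by
    calc (Finset.univ.filter Bad).card ≤ (bad1 ∪ bad2).card := Finset.card_le_card hsub
      _ ≤ bad1.card + bad2.card := Finset.card_union_le _ _
      _ ≤ 3 * q ^ (2 * β₁) := by omega
  -- the good set
  have hgood : (Finset.univ.filter P).card + (Finset.univ.filter Bad).card ≥ q ^ m := by
    have hsubg : Finset.univ.filter (fun b => ¬ Bad b) ⊆ Finset.univ.filter P := by
      intro b hb
      rw [Finset.mem_filter] at hb ⊢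
      exact ⟨hb.1, hkey b hb.2⟩
    have := Finset.card_filter_add_card_filter_not (s := (Finset.univ : Finset L))
      (p := Bad)
    rw [Finset.card_univ, hcardL] at this
    have hle := Finset.card_le_card hsubg
    omega
  -- cardinalities
  have hNcard : Nat.card {b : L // P b} = (Finset.univ.filter P).card := by
    rw [Nat.card_eq_fintype_card, Fintype.card_subtype]
  have hNL : Nat.card L = q ^ m := by rw [Nat.card_eq_fintype_card, hcardL]
  rw [hNL]
  have hq0 : (0:ℝ) < (q:ℝ) ^ m := by positivity
  have hT : (q:ℝ) ^ m - 3 * (q:ℝ) ^ (2*β₁) ≤ (Nat.card {b : L // P b} : ℝ) := by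
    rw [hNcard]
    have c1 : ((q ^ m : ℕ) : ℝ) ≤ ((Finset.univ.filter P).card : ℝ) + ((Finset.univ.filter Bad).card : ℝ) := by
      exact_mod_cast hgood
    have c2 : ((Finset.univ.filter Bad).card : ℝ) ≤ ((3 * q ^ (2*β₁) : ℕ) : ℝ) := by
      exact_mod_cast hbadcard
    push_cast at c1 c2
    linarith
  have heq1 : 1 - 3 * (q : ℝ) ^ (2 * β₁) / (q : ℝ) ^ m
      = ((q:ℝ) ^ m - 3 * (q:ℝ) ^ (2*β₁)) / (q:ℝ) ^ m := by
    field_simp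
  rw [heq1]
  push_cast
  gcongr
end

section
/- In the LRPC decoding setting with dim S = dim(EF) − 1 (codimension c = 1), for a fixed index i the probability that dim(S_i ∩ E) = r, where S_i = f_i^{-1}S and S is a uniformly random subspace of EF of dimension rd − 1, equals the Gaussian ratio [rd−1 choose r]_q / [rd choose r]_q, which is approximately q^{-r}; otherwise dim(S_i ∩ E) = r − 1. -/
open Module Submodule

/-- Gaussian binomial coefficient `[a choose n]_q` as a real number,
via the product formula `∏_{i<a} (q^n - q^i)/(q^a - q^i)`. -/
noncomputable def gaussBinom (q a n : ℕ) : ℝ :=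
  ∏ i ∈ Finset.range a, ((q : ℝ) ^ n - (q : ℝ) ^ i) / ((q : ℝ) ^ a - (q : ℝ) ^ i)

section Counting

variable {K V : Type*} [Field K] [Fintype K] [AddCommGroup V] [Module K V] [Finite V]

lemma my_card_nonzero {A : Type*} [Finite A] [Zero A] :
    Nat.card {y : A // y ≠ 0} = Nat.card A - 1 := by
  classical
  have e : {y : A // y = 0} ⊕ {y : A // ¬ y = 0} ≃ A := Equiv.sumCompl _
  have h1 : Nat.card {y : A // y = 0} = 1 := by
    rw [Nat.card_eq_one_iff_unique]
    exact ⟨⟨fun a b => Subtype.ext (a.2.trans b.2.symm)⟩, ⟨⟨0, rfl⟩⟩⟩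
  have h2 := Nat.card_congr e
  rw [Nat.card_sum, h1] at h2
  simp only [ne_eq]
  omega

lemma my_finrank_ker (φ : Module.Dual K V) (hφ : φ ≠ 0) :
    finrank K (LinearMap.ker φ) + 1 = finrank K V := by
  have h := LinearMap.finrank_range_add_finrank_ker φ
  have hr : LinearMap.range φ = ⊤ := by
    obtain ⟨x, hx⟩ : ∃ x, φ x ≠ 0 := by
      by_contra hco; push_neg at hco; exact hφ (LinearMap.ext fun x => hco x)
    rw [eq_top_iff]
    intro c _
    exact ⟨(c / φ x) • x, by simp [div_mul_cancel₀, hx]⟩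
  rw [hr] at h
  have : finrank K (⊤ : Submodule K K) = 1 := by
    rw [finrank_top, Module.finrank_self]
  omega

lemma my_card_hyperplanes (hn : 1 ≤ finrank K V) :
    Nat.card {S : Submodule K V // finrank K S = finrank K V - 1} * (Fintype.card K - 1)
      = Fintype.card K ^ finrank K V - 1 := by
  classical
  haveI : Finite (Module.Dual K V) := Module.finite_of_finite K
  set n := finrank K V with hn'
  let ψ : {φ : Module.Dual K V // φ ≠ 0} → {S : Submodule K V // finrank K S = n - 1} :=
    fun φ => ⟨LinearMap.ker φ.1, by have := my_finrank_ker φ.1 φ.2; omega⟩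
  have hfiber : ∀ S : {S : Submodule K V // finrank K S = n - 1},
      Nat.card {x : {φ : Module.Dual K V // φ ≠ 0} // ψ x = S} = Fintype.card K - 1 := by
    intro S
    have hann : finrank K S.1.dualAnnihilator = 1 := by
      have h1 := Submodule.finrank_quotient_add_finrank S.1
      have h2 : finrank K (V ⧸ S.1) = finrank K S.1.dualAnnihilator :=
        (Subspace.quotEquivAnnihilator S.1).finrank_eq
      have h3 := S.2
      omega
    have e : {x : {φ : Module.Dual K V // φ ≠ 0} // ψ x = S}
        ≃ {y : S.1.dualAnnihilator // y ≠ 0} :=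
      { toFun := fun x => ⟨⟨x.1.1, by
          rw [Submodule.mem_dualAnnihilator]
          intro w hw
          have hker : LinearMap.ker x.1.1 = S.1 := congrArg Subtype.val x.2
          rw [← hker] at hw; exact hw⟩,
          fun h => x.1.2 (congrArg Subtype.val h)⟩
        invFun := fun y => ⟨⟨y.1.1, fun h => y.2 (Subtype.ext h)⟩, by
          apply Subtype.ext
          show LinearMap.ker y.1.1 = S.1
          have hle : S.1 ≤ LinearMap.ker y.1.1 := fun w hw =>
            (Submodule.mem_dualAnnihilator _).mp y.1.2 w hw
          have h1 : finrank K (LinearMap.ker (y.1.1)) + 1 = n :=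
            my_finrank_ker _ (fun h => y.2 (Subtype.ext h))
          have h3 := S.2
          exact (Submodule.eq_of_le_of_finrank_eq hle (by omega)).symm⟩
        left_inv := fun x => rfl
        right_inv := fun y => rfl }
    rw [Nat.card_congr e, my_card_nonzero]
    have : Nat.card S.1.dualAnnihilator = Fintype.card K := by
      letI : Fintype S.1.dualAnnihilator := Fintype.ofFinite _
      rw [Nat.card_eq_fintype_card, card_eq_pow_finrank (K := K), hann, pow_one]
    rw [this]
  have htot : Nat.card {φ : Module.Dual K V // φ ≠ 0} = Fintype.card K ^ n - 1 := by
    rw [my_card_nonzero]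
    letI : Fintype (Module.Dual K V) := Fintype.ofFinite _
    rw [Nat.card_eq_fintype_card, card_eq_pow_finrank (K := K), Subspace.dual_finrank_eq]
  have hsum := Nat.card_congr (Equiv.sigmaFiberEquiv ψ).symm
  rw [htot] at hsum
  letI : Fintype {S : Submodule K V // finrank K S = n - 1} := Fintype.ofFinite _
  letI : ∀ S, Fintype {x : {φ : Module.Dual K V // φ ≠ 0} // ψ x = S} :=
    fun S => Fintype.ofFinite _
  rw [Nat.card_eq_fintype_card, Fintype.card_sigma] at hsum
  have : ∀ S, Fintype.card {x : {φ : Module.Dual K V // φ ≠ 0} // ψ x = S}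
      = Fintype.card K - 1 := by
    intro S; rw [← Nat.card_eq_fintype_card]; exact hfiber S
  rw [Finset.sum_congr rfl (fun S _ => this S), Finset.sum_const, smul_eq_mul] at hsum
  rw [Nat.card_eq_fintype_card, ← Finset.card_univ]
  omega

lemma my_finrank_comap_mkQ (W : Submodule K V) (T : Submodule K (V ⧸ W)) :
    finrank K (Submodule.comap W.mkQ T) = finrank K T + finrank K W := by
  set S' : Submodule K V := Submodule.comap W.mkQ T with hS'
  have hWS : W ≤ S' := Submodule.le_comap_mkQ W T
  let g : S' →ₗ[K] V ⧸ W := W.mkQ.comp S'.subtype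
  have hrange : LinearMap.range g = T := by
    rw [LinearMap.range_comp, Submodule.range_subtype]
    exact Submodule.map_comap_eq_self (by simp [Submodule.range_mkQ])
  have hker : finrank K (LinearMap.ker g) = finrank K W := by
    have hkg : LinearMap.ker g = Submodule.comap S'.subtype W := by
      rw [LinearMap.ker_comp, Submodule.ker_mkQ]
    have hms : Submodule.map S'.subtype (Submodule.comap S'.subtype W) = W := by
      rw [Submodule.map_comap_subtype]
      exact inf_eq_right.mpr hWS
    have hh : finrank K (Submodule.comap S'.subtype W) = finrank K W := by
      conv_rhs => rw [← hms]
      rw [Submodule.finrank_map_subtype_eq]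
    rw [hkg, hh]
  have h := LinearMap.finrank_range_add_finrank_ker g
  rw [hrange, hker] at h
  have h2 : finrank K T ≤ finrank K S' := by
    rw [← h]; omega
  omega

end Counting

section Counting2
variable {K V : Type*} [Field K] [Fintype K] [AddCommGroup V] [Module K V] [Finite V]

lemma my_card_above (W : Submodule K V) (k : ℕ) (hk : finrank K W ≤ k) :
    Nat.card {S : Submodule K V // W ≤ S ∧ finrank K S = k}
      = Nat.card {T : Submodule K (V ⧸ W) // finrank K T = k - finrank K W} := by
  refine (Nat.card_congr ?_).symm
  exact
  { toFun := fun T => ⟨Submodule.comap W.mkQ T.1, Submodule.le_comap_mkQ W _, by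
      rw [my_finrank_comap_mkQ]; have := T.2; omega⟩
    invFun := fun S => ⟨Submodule.map W.mkQ S.1, by
      have h := my_finrank_comap_mkQ W (Submodule.map W.mkQ S.1)
      have hc : Submodule.comap W.mkQ (Submodule.map W.mkQ S.1) = S.1 := by
        rw [Submodule.comap_map_mkQ, sup_eq_right.mpr S.2.1]
      rw [hc, S.2.2] at h
      omega⟩
    left_inv := fun T => by
      apply Subtype.ext
      exact Submodule.map_comap_eq_self (by simp [Submodule.range_mkQ])
    right_inv := fun S => by
      apply Subtype.ext
      show Submodule.comap W.mkQ (Submodule.map W.mkQ S.1) = S.1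
      rw [Submodule.comap_map_mkQ, sup_eq_right.mpr S.2.1] }

end Counting2

lemma my_card_restrict {R M : Type*} [Ring R] [AddCommGroup M] [Module R M]
    (p : Submodule R M) (P : Submodule R M → Prop) :
    Nat.card {S : Submodule R M // S ≤ p ∧ P S}
      = Nat.card {S' : Submodule R ↥p // P (Submodule.map p.subtype S')} :=
  (Nat.card_congr (((Submodule.MapSubtype.orderIso p).toEquiv.subtypeEquiv
      (fun _ => Iff.rfl)).trans (Equiv.subtypeSubtypeEquivSubtypeInter _ _))).symm

lemma my_telescope (q N : ℕ) (hq : 2 ≤ q) :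
    ∀ r, r ≤ N →
      (∏ i ∈ Finset.range r, ((q:ℝ) ^ (N-1) - (q:ℝ) ^ i)) * ((q:ℝ) ^ N - 1)
        = ((q:ℝ) ^ (N - r) - 1) * ∏ i ∈ Finset.range r, ((q:ℝ) ^ N - (q:ℝ) ^ i) := by
  intro r
  induction r with
  | zero => intro _; simp [mul_comm]
  | succ r ih =>
    intro hr
    have ihr := ih (by omega)
    rw [Finset.prod_range_succ, Finset.prod_range_succ]
    obtain ⟨k, hk⟩ : ∃ k, N = k + r + 1 := ⟨N - r - 1, by omega⟩
    subst hk
    have e1 : k + r + 1 - (r+1) = k := by omega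
    have e2 : k + r + 1 - r = k + 1 := by omega
    have e3 : k + r + 1 - 1 = k + r := by omega
    simp only [e1, e2, e3] at ihr ⊢
    have key : ((q:ℝ) ^ k - 1) * ((q:ℝ) ^ (k+r+1) - (q:ℝ) ^ r)
        = ((q:ℝ) ^ (k+1) - 1) * ((q:ℝ) ^ (k+r) - (q:ℝ) ^ r) := by ring
    linear_combination ((q:ℝ) ^ (k+r) - (q:ℝ) ^ r) * ihr
      + (∏ i ∈ Finset.range r, ((q:ℝ) ^ (k+r+1) - (q:ℝ) ^ i)) * key

lemma my_gauss_ratio (q r N : ℕ) (hq : 2 ≤ q) (hrN : r ≤ N) (hN : 1 ≤ N) :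
    gaussBinom q r (N - 1) / gaussBinom q r N
      = ((q:ℝ) ^ (N - r) - 1) / ((q:ℝ) ^ N - 1) := by
  have hq1 : (1:ℝ) < (q:ℝ) := by exact_mod_cast hq
  have hpow : ∀ a b : ℕ, a < b → (q:ℝ) ^ a < (q:ℝ) ^ b := fun a b h =>
    pow_lt_pow_right₀ hq1 h
  have hD : (∏ i ∈ Finset.range r, ((q:ℝ) ^ r - (q:ℝ) ^ i)) ≠ 0 := by
    apply Finset.prod_ne_zero_iff.mpr
    intro i hi
    have := hpow i r (Finset.mem_range.mp hi)
    exact sub_ne_zero.mpr (ne_of_gt this)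
  have hP2 : (∏ i ∈ Finset.range r, ((q:ℝ) ^ N - (q:ℝ) ^ i)) ≠ 0 := by
    apply Finset.prod_ne_zero_iff.mpr
    intro i hi
    have := hpow i N (lt_of_lt_of_le (Finset.mem_range.mp hi) hrN)
    exact sub_ne_zero.mpr (ne_of_gt this)
  have hQN : ((q:ℝ) ^ N - 1) ≠ 0 := by
    have := hpow 0 N (by omega)
    simp only [pow_zero] at this
    exact sub_ne_zero.mpr (ne_of_gt this)
  unfold gaussBinom
  rw [Finset.prod_div_distrib, Finset.prod_div_distrib, div_div_div_comm,
    div_self hD, div_one, div_eq_div_iff hP2 hQN]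
  exact my_telescope q N hq r hrN

/-- For `S` a uniformly random hyperplane of `EF` (dimension `rd - 1`),
the probability that `dim (S_i ∩ E) = r` equals `[rd-1 choose r]_q / [rd choose r]_q`
(with the Gaussian ratio written via `gaussBinom q r`), and otherwise
`dim (S_i ∩ E) = r - 1`. -/
theorem stmt_11 (q m r d : ℕ) (hq : 2 ≤ q)
    (K L : Type) [Field K] [Field L] [Algebra K L] [Fintype K] [Fintype L]
    (hcard : Fintype.card K = q) (hm : Module.finrank K L = m)
    (E F : Submodule K L)
    (hE : Module.finrank K ↥E = r) (hF : Module.finrank K ↥F = d)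
    (hEF : Module.finrank K ↥(E * F) = r * d)
    (f : Basis (Fin d) K ↥F) (i : Fin d) :
    ((Nat.card {S : Submodule K L // S ≤ E * F ∧ Module.finrank K ↥S = r * d - 1 ∧
        Module.finrank K
          ↥(Submodule.map (LinearMap.mulLeft K ((f i : L))⁻¹) S ⊓ E) = r} : ℝ)
      / (Nat.card {S : Submodule K L //
          S ≤ E * F ∧ Module.finrank K ↥S = r * d - 1} : ℝ)
      = gaussBinom q r (r * d - 1) / gaussBinom q r (r * d))
    ∧ ∀ S : Submodule K L, S ≤ E * F → Module.finrank K ↥S = r * d - 1 →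
        Module.finrank K
          ↥(Submodule.map (LinearMap.mulLeft K ((f i : L))⁻¹) S ⊓ E) ≠ r →
        Module.finrank K
          ↥(Submodule.map (LinearMap.mulLeft K ((f i : L))⁻¹) S ⊓ E) = r - 1 := by
  classical
  haveI : FiniteDimensional K L := inferInstance
  have hd : 0 < d := i.pos
  -- basic setup about c := f i
  set c : L := (f i : L) with hc_def
  have hc : c ≠ 0 := by
    intro h
    exact f.ne_zero i (Subtype.ext h)
  -- mul by c as a linear equivalence
  have hcomp1 : (LinearMap.mulLeft K c).comp (LinearMap.mulLeft K c⁻¹) = LinearMap.id := by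
    apply LinearMap.ext
    intro x
    simp [LinearMap.mulLeft_apply, ← mul_assoc, mul_inv_cancel₀ hc]
  have hcomp2 : (LinearMap.mulLeft K c⁻¹).comp (LinearMap.mulLeft K c) = LinearMap.id := by
    apply LinearMap.ext
    intro x
    simp [LinearMap.mulLeft_apply, ← mul_assoc, inv_mul_cancel₀ hc]
  set meq : L ≃ₗ[K] L :=
    LinearEquiv.ofLinear (LinearMap.mulLeft K c) (LinearMap.mulLeft K c⁻¹) hcomp1 hcomp2
    with hmeq
  have hmeqcoe : (meq : L →ₗ[K] L) = LinearMap.mulLeft K c := rfl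
  have hmeqsymmcoe : (meq.symm : L →ₗ[K] L) = LinearMap.mulLeft K c⁻¹ := rfl
  have hmapcomap : ∀ S : Submodule K L,
      Submodule.map (LinearMap.mulLeft K c⁻¹) S = Submodule.comap (LinearMap.mulLeft K c) S := by
    intro S
    ext x
    simp only [Submodule.mem_map, Submodule.mem_comap, LinearMap.mulLeft_apply]
    constructor
    · rintro ⟨s, hs, rfl⟩
      rwa [← mul_assoc, mul_inv_cancel₀ hc, one_mul]
    · intro h
      exact ⟨c * x, h, by rw [← mul_assoc, inv_mul_cancel₀ hc, one_mul]⟩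
  -- W = c • E
  set W : Submodule K L := Submodule.map (LinearMap.mulLeft K c) E with hW_def
  have hWle : W ≤ E * F := by
    rintro x ⟨e, he, rfl⟩
    simp only [LinearMap.mulLeft_apply]
    have h2 : e * c ∈ E * F := Submodule.mul_mem_mul he (f i).2
    rwa [mul_comm e c] at h2
  have hWrank : Module.finrank K ↥W = r := by
    rw [hW_def, ← hmeqcoe, LinearEquiv.finrank_map_eq, hE]
  -- second part of the statement
  have part2 : ∀ S : Submodule K L, S ≤ E * F → Module.finrank K ↥S = r * d - 1 →
      Module.finrank K ↥(Submodule.map (LinearMap.mulLeft K c⁻¹) S ⊓ E) ≠ r →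
      Module.finrank K ↥(Submodule.map (LinearMap.mulLeft K c⁻¹) S ⊓ E) = r - 1 := by
    intro S hSle hSrank hne
    set Si : Submodule K L := Submodule.map (LinearMap.mulLeft K c⁻¹) S with hSi_def
    have hSirank : Module.finrank K ↥Si = r * d - 1 := by
      rw [hSi_def, ← hmeqsymmcoe, LinearEquiv.finrank_map_eq, hSrank]
    have h1 : Module.finrank K ↥(Si ⊔ E) + Module.finrank K ↥(Si ⊓ E)
        = Module.finrank K ↥Si + Module.finrank K ↥E :=
      Submodule.finrank_sup_add_finrank_inf_eq Si E
    have hsup_le : Si ⊔ E ≤ Submodule.comap (LinearMap.mulLeft K c) (E * F) := by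
      apply sup_le
      · rw [hSi_def, hmapcomap]
        exact Submodule.comap_mono hSle
      · exact Submodule.map_le_iff_le_comap.mp hWle
    have hcomaprank :
        Module.finrank K ↥(Submodule.comap (LinearMap.mulLeft K c) (E * F)) = r * d := by
      rw [← hmapcomap, ← hmeqsymmcoe, LinearEquiv.finrank_map_eq, hEF]
    have hsup : Module.finrank K ↥(Si ⊔ E) ≤ r * d := by
      rw [← hcomaprank]
      exact Submodule.finrank_mono hsup_le
    have hinf_le : Module.finrank K ↥(Si ⊓ E) ≤ r := by
      rw [← hE]
      exact Submodule.finrank_mono inf_le_right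
    have hrd : r ≤ r * d := Nat.le_mul_of_pos_right r hd
    rw [hSirank, hE] at h1
    omega
  refine ⟨?_, part2⟩
  -- part 1
  rcases Nat.eq_zero_or_pos r with hr0 | hrpos
  · -- degenerate case r = 0
    subst hr0
    have hEFbot : E * F = ⊥ := by
      have h0 : Module.finrank K ↥(E * F) = 0 := by rw [hEF]; ring
      exact Submodule.finrank_eq_zero.mp h0
    have hnum : Nat.card {S : Submodule K L // S ≤ E * F ∧ Module.finrank K ↥S = 0 * d - 1 ∧
        Module.finrank K ↥(Submodule.map (LinearMap.mulLeft K c⁻¹) S ⊓ E) = 0} = 1 := by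
      rw [Nat.card_eq_one_iff_unique]
      constructor
      · constructor
        intro a b
        apply Subtype.ext
        have ha' : a.1 = ⊥ := le_bot_iff.mp (le_trans a.2.1 (le_of_eq hEFbot))
        have hb' : b.1 = ⊥ := le_bot_iff.mp (le_trans b.2.1 (le_of_eq hEFbot))
        rw [ha', hb']
      · refine ⟨⟨⊥, bot_le, ?_, ?_⟩⟩
        · simp [finrank_bot]
        · have hEbot : E = ⊥ := Submodule.finrank_eq_zero.mp hE
          rw [Submodule.map_bot, hEbot, inf_idem, finrank_bot]
    have hden : Nat.card {S : Submodule K L //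
        S ≤ E * F ∧ Module.finrank K ↥S = 0 * d - 1} = 1 := by
      rw [Nat.card_eq_one_iff_unique]
      constructor
      · constructor
        intro a b
        apply Subtype.ext
        have ha' : a.1 = ⊥ := le_bot_iff.mp (le_trans a.2.1 (le_of_eq hEFbot))
        have hb' : b.1 = ⊥ := le_bot_iff.mp (le_trans b.2.1 (le_of_eq hEFbot))
        rw [ha', hb']
      · exact ⟨⟨⊥, bot_le, by simp [finrank_bot]⟩⟩
    rw [hnum, hden]
    simp [gaussBinom]
  -- main case r ≥ 1
  · -- rewrite the numerator condition as W ≤ S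
    have keyiff : ∀ S : Submodule K L,
        (Module.finrank K ↥(Submodule.map (LinearMap.mulLeft K c⁻¹) S ⊓ E) = r ↔ W ≤ S) := by
      intro S
      rw [hmapcomap S]
      constructor
      · intro h
        have heq : Submodule.comap (LinearMap.mulLeft K c) S ⊓ E = E :=
          Submodule.eq_of_le_of_finrank_eq inf_le_right (by rw [h, hE])
        have hE' : E ≤ Submodule.comap (LinearMap.mulLeft K c) S := by
          rw [← heq]; exact inf_le_left
        exact Submodule.map_le_iff_le_comap.mpr hE'
      · intro h
        have hE' : E ≤ Submodule.comap (LinearMap.mulLeft K c) S :=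
          Submodule.map_le_iff_le_comap.mp h
        rw [inf_eq_right.mpr hE', hE]
    have hnum1 : Nat.card {S : Submodule K L // S ≤ E * F ∧ Module.finrank K ↥S = r * d - 1 ∧
          Module.finrank K ↥(Submodule.map (LinearMap.mulLeft K c⁻¹) S ⊓ E) = r}
        = Nat.card {S : Submodule K L // S ≤ E * F ∧
            (Module.finrank K ↥S = r * d - 1 ∧ W ≤ S)} :=
      Nat.card_congr (Equiv.subtypeEquivRight fun S => by rw [keyiff S])
    -- move to submodules of E*F
    set V : Type := ↥(E * F) with hV_def
    set W' : Submodule K V := Submodule.comap (E * F).subtype W with hW'_def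
    have hmapW' : Submodule.map (E * F).subtype W' = W := by
      rw [hW'_def, Submodule.map_comap_subtype]
      exact inf_eq_right.mpr hWle
    have hW'rank : Module.finrank K ↥W' = r := by
      rw [← hWrank, ← hmapW', Submodule.finrank_map_subtype_eq]
    have hnum2 : Nat.card {S : Submodule K L // S ≤ E * F ∧
          (Module.finrank K ↥S = r * d - 1 ∧ W ≤ S)}
        = Nat.card {S' : Submodule K V // W' ≤ S' ∧ Module.finrank K ↥S' = r * d - 1} := by
      rw [my_card_restrict (E * F)
        (fun S => Module.finrank K ↥S = r * d - 1 ∧ W ≤ S)]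
      apply Nat.card_congr
      apply Equiv.subtypeEquivRight
      intro S'
      rw [Submodule.finrank_map_subtype_eq, ← hmapW',
        Submodule.map_le_map_iff_of_injective (Submodule.injective_subtype (E * F)) W' S',
        and_comm]
    have hden2 : Nat.card {S : Submodule K L // S ≤ E * F ∧ Module.finrank K ↥S = r * d - 1}
        = Nat.card {S' : Submodule K V // Module.finrank K ↥S' = r * d - 1} := by
      rw [my_card_restrict (E * F) (fun S => Module.finrank K ↥S = r * d - 1)]
      apply Nat.card_congr
      apply Equiv.subtypeEquivRight
      intro S'
      rw [Submodule.finrank_map_subtype_eq]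
    have hVrank : Module.finrank K V = r * d := hEF
    have hrd1 : 1 ≤ r * d := Nat.one_le_iff_ne_zero.mpr (by positivity)
    -- the denominator count
    have hB : Nat.card {S' : Submodule K V // Module.finrank K ↥S' = r * d - 1} * (q - 1)
        = q ^ (r * d) - 1 := by
      have h := my_card_hyperplanes (K := K) (V := V) (by rw [hVrank]; exact hrd1)
      rw [hVrank, hcard] at h
      exact h
    -- the numerator count
    have hA : Nat.card {S' : Submodule K V // W' ≤ S' ∧ Module.finrank K ↥S' = r * d - 1}
          * (q - 1) = q ^ (r * d - r) - 1 := by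
      by_cases hd1 : d = 1
      · subst hd1
        have hempty : IsEmpty {S' : Submodule K V // W' ≤ S' ∧
            Module.finrank K ↥S' = r * 1 - 1} := by
          constructor
          rintro ⟨S', hle, hrank⟩
          have := Submodule.finrank_mono hle
          rw [hW'rank, hrank] at this
          omega
        rw [Nat.card_of_isEmpty]
        have : r * 1 - r = 0 := by omega
        rw [this]
        simp
      · have hd2 : 2 ≤ d := by omega
        have hr2d : r * 2 ≤ r * d := Nat.mul_le_mul_left r hd2
        have hkle : Module.finrank K ↥W' ≤ r * d - 1 := by rw [hW'rank]; omega
        rw [my_card_above W' (r * d - 1) hkle, hW'rank]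
        haveI : Finite (V ⧸ W') := Finite.of_surjective _ (Submodule.mkQ_surjective W')
        have hquot : Module.finrank K (V ⧸ W') = r * d - r := by
          have h := Submodule.finrank_quotient_add_finrank W'
          rw [hW'rank, hVrank] at h
          omega
        have h := my_card_hyperplanes (K := K) (V := V ⧸ W') (by rw [hquot]; omega)
        rw [hquot, hcard] at h
        have he : r * d - r - 1 = r * d - 1 - r := by omega
        rw [he] at h
        exact h
    -- put everything together
    rw [hnum1, hnum2, hden2]
    rw [my_gauss_ratio q r (r * d) hq (Nat.le_mul_of_pos_right r hd) hrd1]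
    set A : ℕ := Nat.card {S' : Submodule K V // W' ≤ S' ∧
      Module.finrank K ↥S' = r * d - 1} with hA_def
    set B : ℕ := Nat.card {S' : Submodule K V // Module.finrank K ↥S' = r * d - 1} with hB_def
    have hq1 : 1 ≤ q := by omega
    have hp1 : 1 ≤ q ^ (r * d - r) := Nat.one_le_pow _ _ (by omega)
    have hp2 : 1 ≤ q ^ (r * d) := Nat.one_le_pow _ _ (by omega)
    have hAr : (A : ℝ) * ((q : ℝ) - 1) = (q : ℝ) ^ (r * d - r) - 1 := by
      have := congrArg (Nat.cast : ℕ → ℝ) hA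
      rwa [Nat.cast_mul, Nat.cast_sub hq1, Nat.cast_sub hp1, Nat.cast_pow, Nat.cast_one]
        at this
    have hBr : (B : ℝ) * ((q : ℝ) - 1) = (q : ℝ) ^ (r * d) - 1 := by
      have := congrArg (Nat.cast : ℕ → ℝ) hB
      rwa [Nat.cast_mul, Nat.cast_sub hq1, Nat.cast_sub hp2, Nat.cast_pow, Nat.cast_one]
        at this
    have hqR : (1 : ℝ) < (q : ℝ) := by exact_mod_cast hq
    have hQN : ((q : ℝ) ^ (r * d) - 1) ≠ 0 := by
      have : (1 : ℝ) < (q : ℝ) ^ (r * d) := by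
        calc (1 : ℝ) < (q : ℝ) := hqR
        _ ≤ (q : ℝ) ^ (r * d) := le_self_pow₀ (le_of_lt hqR) (by omega)
      exact sub_ne_zero.mpr (ne_of_gt this)
    have hBne : (B : ℝ) ≠ 0 := by
      intro h0
      rw [h0, zero_mul] at hBr
      exact hQN hBr.symm
    rw [div_eq_div_iff hBne hQN]
    linear_combination (B : ℝ) * hAr - (A : ℝ) * hBr
end

section
/- In the LRPC setting with d = 2: if dim(EF) = 2r and S ⊆ EF with dim S = n−k, then the expansion S ↦ (S + f₁f₂^{-1}S) ∩ (S + f₂f₁^{-1}S) can recover EF only if 3r ≤ 2(n−k); in particular the decodable error rank is r ≤ ⌊2(n−k)/3⌋. -/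
open Module Submodule

/-
Put `c = f₁f₂⁻¹`, so that `f₂f₁⁻¹ = c⁻¹`. If `EF ⊆ S + c⁻¹S`, multiplying by `c` gives
`cEF ⊆ cS + S`; together with `EF ⊆ S + cS` this yields `EF + cEF ⊆ S + cS`. Comparing
dimensions, `3r = dim (EF + cEF) ≤ dim (S + cS) ≤ 2 dim S = 2(n - k)`.
-/

theorem Submodule.sup_map_le_of_le_inf {R M : Type*} [Semiring R] [AddCommMonoid M]
    [Module R M] {f g : M →ₗ[R] M} (hfg : f ∘ₗ g = LinearMap.id) {S V : Submodule R M}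
    (hV : V ≤ (S ⊔ S.map f) ⊓ (S ⊔ S.map g)) :
    V ⊔ V.map f ≤ S ⊔ S.map f := by
  refine sup_le (hV.trans inf_le_left) ?_
  calc V.map f ≤ (S ⊔ S.map g).map f := map_mono (hV.trans inf_le_right)
    _ = S.map f ⊔ S := by rw [map_sup, ← map_comp, hfg, map_id]
    _ = S ⊔ S.map f := sup_comm _ _

theorem Submodule.finrank_sup_map_le_two_mul {K V : Type*} [DivisionRing K] [AddCommGroup V]
    [Module K V] (f : V →ₗ[K] V) (S : Submodule K V) [FiniteDimensional K S] :
    finrank K ↥(S ⊔ S.map f) ≤ 2 * finrank K S :=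
  calc finrank K ↥(S ⊔ S.map f) ≤ finrank K S + finrank K ↥(S.map f) :=
        finrank_add_le_finrank_add_finrank _ _
    _ ≤ finrank K S + finrank K S := Nat.add_le_add_left (finrank_map_le f S) _
    _ = 2 * finrank K S := (two_mul _).symm

theorem stmt_16_general (n k r : ℕ)
    (K L : Type) [Field K] [Field L] [Algebra K L] [Fintype L]
    (E F : Submodule K L)
    (f₁ f₂ : L) (hf₁0 : f₁ ≠ 0) (hf₂0 : f₂ ≠ 0)
    (hbig : Module.finrank K
        ↥(E * F ⊔ Submodule.map (LinearMap.mulLeft K (f₁ * f₂⁻¹)) (E * F)) = 3 * r)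
    (S : Submodule K L)
    (hdimS : Module.finrank K ↥S = n - k)
    (hrec : (S ⊔ Submodule.map (LinearMap.mulLeft K (f₁ * f₂⁻¹)) S)
        ⊓ (S ⊔ Submodule.map (LinearMap.mulLeft K (f₂ * f₁⁻¹)) S) = E * F) :
    3 * r ≤ 2 * (n - k) := by
  have hinv : LinearMap.mulLeft K (f₁ * f₂⁻¹) ∘ₗ LinearMap.mulLeft K (f₂ * f₁⁻¹) =
      LinearMap.id := by
    rw [← LinearMap.mulLeft_mul, show f₁ * f₂⁻¹ * (f₂ * f₁⁻¹) = 1 by field_simp,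
      LinearMap.mulLeft_one]
  calc 3 * r = _ := hbig.symm
    _ ≤ _ := finrank_mono (sup_map_le_of_le_inf hinv hrec.ge)
    _ ≤ 2 * finrank K S := finrank_sup_map_le_two_mul _ S
    _ = 2 * (n - k) := by rw [hdimS]

/-- In the LRPC setting with `d = 2`: if `dim (EF) = 2r`,
`dim (EF + f₁f₂⁻¹ EF) = 3r`, and `S ⊆ EF` with `dim S = n - k`, then the expansion
`(S + f₁f₂⁻¹S) ∩ (S + f₂f₁⁻¹S)` can recover `EF` only if `3r ≤ 2(n-k)`. -/
theorem stmt_16 (q m n k r : ℕ) (hq : 2 ≤ q) (hkn : k ≤ n)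
    (K L : Type) [Field K] [Field L] [Algebra K L] [Fintype K] [Fintype L]
    (hcard : Fintype.card K = q) (hm : Module.finrank K L = m)
    (E F : Submodule K L) (hE : Module.finrank K ↥E = r)
    (hF : Module.finrank K ↥F = 2)
    (f₁ f₂ : L) (hf₁ : f₁ ∈ F) (hf₂ : f₂ ∈ F) (hf₁0 : f₁ ≠ 0) (hf₂0 : f₂ ≠ 0)
    (hEF : Module.finrank K ↥(E * F) = 2 * r)
    (hbig : Module.finrank K
        ↥(E * F ⊔ Submodule.map (LinearMap.mulLeft K (f₁ * f₂⁻¹)) (E * F)) = 3 * r)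
    (S : Submodule K L) (hS : S ≤ E * F)
    (hdimS : Module.finrank K ↥S = n - k)
    (hrec : (S ⊔ Submodule.map (LinearMap.mulLeft K (f₁ * f₂⁻¹)) S)
        ⊓ (S ⊔ Submodule.map (LinearMap.mulLeft K (f₂ * f₁⁻¹)) S) = E * F) :
    3 * r ≤ 2 * (n - k) :=
  stmt_16_general n k r K L E F f₁ f₂ hf₁0 hf₂0 hbig S hdimS hrec
end

section
/- For q = 2 and 3r = 2(n−k), the success probability of the d = 2 expansion step, given by [n−k choose 3r]₂^{-1} · 2^{(n−k)²} with [a choose n]₂ the Gaussian binomial, i.e. 2^{(n−k)²}/[n−k choose 2(n−k)]₂, converges to a constant approximately 0.29 as n−k → ∞. -/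
open Filter

section Aux
open Real Finset

noncomputable def gg (i : ℕ) : ℝ := 1 - (2 : ℝ) ^ (-(1 + (i : ℤ)))

lemma gg_eq (i : ℕ) : gg i = 1 - (1/2 : ℝ) ^ (i + 1) := by
  unfold gg
  rw [show (-(1 + (i : ℤ))) = -((i + 1 : ℕ) : ℤ) by push_cast; ring, zpow_neg, zpow_natCast,
    one_div, inv_pow]

lemma gg_ge (i : ℕ) : (1/2 : ℝ) ≤ gg i := by
  rw [gg_eq]
  have h1 : (1/2 : ℝ) ^ (i + 1) ≤ (1/2 : ℝ) ^ 1 :=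
    pow_le_pow_of_le_one (by norm_num) (by norm_num) (by omega)
  simp at h1 ⊢; linarith

lemma gg_pos (i : ℕ) : 0 < gg i := lt_of_lt_of_le (by norm_num) (gg_ge i)

lemma gg_le_one (i : ℕ) : gg i ≤ 1 := by
  rw [gg_eq]
  have : (0:ℝ) ≤ (1/2 : ℝ) ^ (i + 1) := by positivity
  linarith

lemma log_lb {x : ℝ} (h0 : 0 ≤ x) (h1 : x ≤ 1/2) : -(2*x) ≤ Real.log (1 - x) := by
  have h2 : (0:ℝ) < 1 - x := by linarith
  have h4 := Real.log_le_sub_one_of_pos (inv_pos.2 h2)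
  rw [Real.log_inv] at h4
  have h3 : (1-x)⁻¹ ≤ 1 + 2*x := by
    rw [inv_eq_one_div, div_le_iff₀ h2]; nlinarith
  linarith

lemma log_gg_lb (i : ℕ) : -((1/2:ℝ)^i) ≤ Real.log (gg i) := by
  rw [gg_eq]
  have hle : ((1:ℝ)/2)^(i+1) ≤ 1/2 := by
    calc ((1:ℝ)/2)^(i+1) ≤ (1/2:ℝ)^1 := pow_le_pow_of_le_one (by norm_num) (by norm_num) (by omega)
      _ = 1/2 := pow_one _
  have h := log_lb (x := (1/2:ℝ)^(i+1)) (by positivity) hle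
  calc -((1/2:ℝ)^i) = -(2 * (1/2:ℝ)^(i+1)) := by ring
    _ ≤ _ := h

lemma summable_log_gg : Summable fun i => Real.log (gg i) := by
  rw [← summable_neg_iff]
  have hs : Summable fun i : ℕ => ((1:ℝ)/2)^i := summable_geometric_of_lt_one (by norm_num) (by norm_num)
  apply Summable.of_nonneg_of_le ?_ ?_ hs
  · intro i
    simpa using Real.log_nonpos (le_of_lt (gg_pos i)) (gg_le_one i)
  · intro i
    have := log_gg_lb i
    simp only [neg_le] at this ⊢
    linarith

lemma multipliable_gg : Multipliable gg :=
  Real.multipliable_of_summable_log (fun i => gg_pos i) summable_log_gg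

lemma hA (t : ℕ) : ∏ i ∈ range t, ((2:ℝ)^t - 2^i) = 2^(t*t) * ∏ i ∈ range t, gg i := by
  rw [← Finset.prod_range_reflect (fun i => (2:ℝ)^t - 2^i) t]
  rw [show (2:ℝ)^(t*t) * ∏ i ∈ range t, gg i = ∏ i ∈ range t, (2^t * gg i) by
    rw [Finset.prod_mul_distrib, Finset.prod_const, ← pow_mul, Finset.card_range]]
  apply Finset.prod_congr rfl
  intro j hj
  rw [Finset.mem_range] at hj
  have e : (2:ℝ)^(t-1-j) * 2^(j+1) = 2^t := by rw [← pow_add]; congr 1; omega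
  have h2 : ((1:ℝ)/2)^(j+1) = ((2:ℝ)^(j+1))⁻¹ := by rw [one_div, inv_pow]
  have hpos : (0:ℝ) < 2^(j+1) := by positivity
  rw [gg_eq, h2]
  field_simp
  linarith [e]

lemma hB (t : ℕ) : ∏ i ∈ range t, ((2:ℝ)^(2*t) - 2^i)
    = 2^(2*t*t) * ∏ j ∈ range t, gg (t+j) := by
  rw [← Finset.prod_range_reflect (fun i => (2:ℝ)^(2*t) - 2^i) t]
  rw [show (2:ℝ)^(2*t*t) * ∏ j ∈ range t, gg (t+j) = ∏ j ∈ range t, (2^(2*t) * gg (t+j)) by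
    rw [Finset.prod_mul_distrib, Finset.prod_const, ← pow_mul, Finset.card_range]]
  apply Finset.prod_congr rfl
  intro j hj
  rw [Finset.mem_range] at hj
  have e : (2:ℝ)^(t-1-j) * 2^(t+j+1) = 2^(2*t) := by rw [← pow_add]; congr 1; omega
  have h2 : ((1:ℝ)/2)^(t+j+1) = ((2:ℝ)^(t+j+1))⁻¹ := by rw [one_div, inv_pow]
  have hpos : (0:ℝ) < 2^(t+j+1) := by positivity
  rw [gg_eq, show t+j+1 = (t+j)+1 by ring, ← show t+j+1 = (t+j)+1 by ring, h2]
  field_simp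
  linarith [e]

lemma key (t : ℕ) : (2:ℝ)^(t^2) / ∏ i ∈ range t, (((2:ℝ)^(2*t) - 2^i)/((2:ℝ)^t - 2^i))
    = (∏ i ∈ range t, gg i) * (∏ i ∈ range t, gg i) / ∏ i ∈ range (2*t), gg i := by
  have hP : (0:ℝ) < ∏ i ∈ range t, gg i := Finset.prod_pos (fun i _ => gg_pos i)
  have hQ : (0:ℝ) < ∏ j ∈ range t, gg (t+j) := Finset.prod_pos (fun i _ => gg_pos _)
  have hsplit : ∏ i ∈ range (2*t), gg i
      = (∏ i ∈ range t, gg i) * ∏ j ∈ range t, gg (t+j) := by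
    rw [two_mul, Finset.prod_range_add]
  rw [Finset.prod_div_distrib, hA, hB, hsplit, show 2*t*t = t*t+t*t by ring, pow_add,
    show t^2 = t*t from sq t]
  have h2 : (0:ℝ) < 2^(t*t) := by positivity
  field_simp

lemma L_bounds : (615195/2097152 : ℝ) * (31/32) ≤ ∏' i, gg i ∧ (∏' i, gg i) ≤ 615195/2097152 := by
  have hshift : Summable fun n => Real.log (gg (n+6)) :=
    (summable_nat_add_iff (f := fun i => Real.log (gg i)) 6).2 summable_log_gg
  have hmul : Multipliable fun n => gg (n+6) :=
    Real.multipliable_of_summable_log (fun n => gg_pos _) hshift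
  have htp : ∏' n, gg (n+6) = Real.exp (∑' n, Real.log (gg (n+6))) := by
    have := Real.rexp_tsum_eq_tprod (f := fun n => gg (n+6)) (fun n => gg_pos _) hshift
    exact this.symm
  have hLsplit : ∏' i, gg i = (∏ i ∈ range 6, gg i) * ∏' n, gg (n+6) :=
    (HasProd.prod_range_mul hmul.hasProd).tprod_eq
  set S := ∑' n, Real.log (gg (n+6)) with hS
  have hS0 : S ≤ 0 := tsum_nonpos (fun n => Real.log_nonpos (gg_pos _).le (gg_le_one _))
  have hSlb : -(1/32 : ℝ) ≤ S := by
    have hgeo : Summable fun n : ℕ => -((1/64:ℝ) * (1/2)^n) :=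
      ((summable_geometric_of_lt_one (by norm_num) (by norm_num)).mul_left _).neg
    have hle : ∀ n, -((1/64:ℝ)*(1/2)^n) ≤ Real.log (gg (n+6)) := by
      intro n
      have h := log_gg_lb (n+6)
      calc -((1/64:ℝ)*(1/2)^n) = -((1/2:ℝ)^(n+6)) := by rw [pow_add]; ring
        _ ≤ _ := h
    have h1 := Summable.tsum_le_tsum hle hgeo hshift
    have ht : ∑' n : ℕ, -((1/64:ℝ)*(1/2)^n) = -(1/32) := by
      rw [tsum_neg, tsum_mul_left, tsum_geometric_of_lt_one (by norm_num) (by norm_num)]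
      norm_num
    rw [ht] at h1
    exact h1
  have hexp_ub : Real.exp S ≤ 1 := Real.exp_le_one_iff.2 hS0
  have hexp_lb : (31/32:ℝ) ≤ Real.exp S := by
    have := Real.add_one_le_exp S; linarith
  have hP6 : ∏ i ∈ range 6, gg i = 615195/2097152 := by
    simp [Finset.prod_range_succ, gg_eq]
    norm_num
  rw [hLsplit, htp, hP6]
  constructor <;> nlinarith

end Aux

open Real Finset in

/-- For `q = 2` and `3r = 2(n-k)`, the success probability
`2^{(n-k)²} / [n-k choose 2(n-k)]₂` converges, as `t = n-k → ∞`, to the constant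
`∏_{i ≥ 1} (1 - 2^{-i}) ≈ 0.29`. -/
theorem stmt_19 :
    Filter.Tendsto
      (fun t : ℕ => (2 : ℝ) ^ (t ^ 2) /
        ∏ i ∈ Finset.range t,
          ((2 : ℝ) ^ (2 * t) - (2 : ℝ) ^ i) / ((2 : ℝ) ^ t - (2 : ℝ) ^ i))
      Filter.atTop
      (nhds (∏' i : ℕ, (1 - (2 : ℝ) ^ (-(1 + (i : ℤ))))))
    ∧ |(∏' i : ℕ, (1 - (2 : ℝ) ^ (-(1 + (i : ℤ))))) - 0.29| < 0.01 := by
  have hnum : |(∏' i, gg i) - 0.29| < 0.01 := by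
    obtain ⟨h1, h2⟩ := L_bounds
    rw [abs_lt]
    constructor <;> nlinarith
  have hLne : (∏' i, gg i) ≠ 0 := by
    obtain ⟨h1, _⟩ := L_bounds
    intro h; rw [h] at h1; norm_num at h1
  have h1 : Tendsto (fun t => ∏ i ∈ range t, gg i) atTop (nhds (∏' i, gg i)) :=
    multipliable_gg.hasProd.tendsto_prod_nat
  have h2 : Tendsto (fun t => ∏ i ∈ range (2*t), gg i) atTop (nhds (∏' i, gg i)) :=
    h1.comp (tendsto_atTop_mono (fun n => by simp; omega) tendsto_id)
  have h3 : Tendsto (fun t => (∏ i ∈ range t, gg i) * (∏ i ∈ range t, gg i)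
      / ∏ i ∈ range (2*t), gg i) atTop
      (nhds ((∏' i, gg i) * (∏' i, gg i) / (∏' i, gg i))) := (h1.mul h1).div h2 hLne
  rw [mul_div_assoc, div_self hLne, mul_one] at h3
  exact ⟨h3.congr (fun t => (key t).symm), hnum⟩
end
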